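/- Let G = (V,E) be a finite connected simple graph, n(G) := |E| − |V| + 1, and let 𝒢₀ := { s ⊆ E : d_i(s) ≠ 1 for all i ∈ V } be the set of all generalized loops of G together with the empty set. Then |𝒢₀| ≤ ((5 − √5)/2)^{n(G)−1} + ((5 + √5)/2)^{n(G)−1}, and equality holds if and only if every s ∈ 𝒢₀ satisfies d_i(s) ≤ 3 for all i ∈ V. -/

import Mathlib

/-!
Put `w 0 = 1` and `w (d + 1) = F_d` (Fibonacci). Then `[d ≠ 1] ≤ w d`, with equality exactly for
`d ≤ 3`, so `|𝒢₀| ≤ ∑_s ∏_i w (d_i s)`, with equality iff every `s ∈ 𝒢₀` has all degrees `≤ 3`.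

By Binet, `w d = ∑_{μ ∈ {φ, ψ}} μ ^ d / (1 + μ ^ 2)`. Expanding the product over the vertices into
a sum over colourings `σ : V → {φ, ψ}`, the sum over `s` factors as `∏_e (1 + σ(u_e) σ(v_e))`.
Since `φ ψ = -1` and `G` is connected, this vanishes unless `σ` is constant, and the two constant
colourings contribute `(1 + μ ^ 2) ^ (|E| - |V|)`, that is `((5 ± √5) / 2) ^ (n(G) - 1)`.
-/

open Finset Real
open scoped goldenRatio

/-- `deg ep1 ep2 i s` is the number of edges in `s` incident to the node `i`. -/
def deg {V E : Type} [DecidableEq V] [DecidableEq E] (ep1 ep2 : E → V) (i : V)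
    (s : Finset E) : ℕ :=
  (s.filter fun e => ep1 e = i ∨ ep2 e = i).card

def loopWeight : ℕ → ℕ
  | 0 => 1
  | d + 1 => Nat.fib d

lemma loopWeight_one : loopWeight 1 = 0 := rfl

lemma one_le_loopWeight {d : ℕ} (hd : d ≠ 1) : 1 ≤ loopWeight d := by
  rcases d with _ | _ | k
  · exact le_rfl
  · exact absurd rfl hd
  · exact Nat.fib_pos.2 k.succ_pos

lemma loopWeight_eq_one_iff {d : ℕ} (hd : d ≠ 1) : loopWeight d = 1 ↔ d ≤ 3 := by
  rcases d with _ | _ | k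
  · simp [loopWeight]
  · exact absurd rfl hd
  · have : Nat.fib 2 < Nat.fib (k + 1) ↔ 2 < k + 1 := Nat.fib_lt_fib le_rfl
    simp only [loopWeight, Nat.fib_two] at this ⊢
    refine ⟨fun h => by omega, fun h => ?_⟩
    obtain rfl | rfl : k = 0 ∨ k = 1 := by omega
    all_goals rfl

lemma one_add_goldenRatio_sq_eq_mul_sqrt : 1 + φ ^ 2 = φ * √5 := by
  rw [← goldenRatio_sub_goldenConj]
  linear_combination goldenRatio_mul_goldenConj

lemma one_add_goldenConj_sq_eq_mul_sqrt : 1 + ψ ^ 2 = -(ψ * √5) := by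
  rw [← goldenRatio_sub_goldenConj]
  linear_combination goldenRatio_mul_goldenConj

lemma one_add_goldenRatio_sq : 1 + φ ^ 2 = (5 + √5) / 2 := by
  rw [goldenRatio]
  ring_nf
  rw [sq_sqrt (by norm_num)]
  ring

lemma one_add_goldenConj_sq : 1 + ψ ^ 2 = (5 - √5) / 2 := by
  rw [goldenConj]
  ring_nf
  rw [sq_sqrt (by norm_num)]
  ring

lemma loopWeight_eq_sum_golden (d : ℕ) :
    (loopWeight d : ℝ) = ∑ c, (1 + ![φ, ψ] c ^ 2)⁻¹ * ![φ, ψ] c ^ d := by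
  have h5 : √5 * (√5)⁻¹ = 1 := mul_inv_cancel₀ (by positivity)
  simp only [Fin.sum_univ_two, Matrix.cons_val_zero, Matrix.cons_val_one,
    one_add_goldenRatio_sq_eq_mul_sqrt, one_add_goldenConj_sq_eq_mul_sqrt, inv_neg, mul_inv,
    inv_goldenRatio, inv_goldenConj]
  rcases d with _ | d
  · rw [loopWeight, Nat.cast_one]
    linear_combination (-1 : ℝ) * h5 - (√5)⁻¹ * goldenRatio_sub_goldenConj
  · rw [loopWeight, coe_fib_eq]
    linear_combination (√5)⁻¹ * (φ ^ d - ψ ^ d) * goldenRatio_mul_goldenConj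

lemma golden_mul_of_ne {c c' : Fin 2} (h : c ≠ c') : ![φ, ψ] c * ![φ, ψ] c' = -1 := by
  fin_cases c <;> fin_cases c' <;>
    simp_all [goldenRatio_mul_goldenConj, goldenConj_mul_goldenRatio]

lemma inv_pow_mul_pow_eq_zpow_sub {x : ℝ} (hx : x ≠ 0) (m n : ℕ) :
    x⁻¹ ^ m * x ^ n = x ^ ((n : ℤ) - m) := by
  rw [zpow_sub₀ hx, zpow_natCast, zpow_natCast, inv_pow, div_eq_mul_inv, mul_comm]

section Graph

variable {V E : Type} {ep1 ep2 : E → V}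

variable (ep1 ep2) in
abbrev edgeGraph : SimpleGraph V := SimpleGraph.fromRel fun a b => ∃ e, ep1 e = a ∧ ep2 e = b

lemma card_le_card_add_one_of_connected [Fintype V] [Fintype E] (hloop : ∀ e, ep1 e ≠ ep2 e)
    (hconn : (edgeGraph ep1 ep2).Connected) : Fintype.card V ≤ Fintype.card E + 1 := by
  have hedges : Nat.card (edgeGraph ep1 ep2).edgeSet ≤ Nat.card E := by
    refine Nat.card_le_card_of_surjective (fun e => ⟨s(ep1 e, ep2 e), ?_⟩) ?_
    · simpa using ⟨hloop e, Or.inl ⟨e, rfl, rfl⟩⟩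
    · rintro ⟨x, hx⟩
      induction x using Sym2.ind with
      | h a b =>
        rw [SimpleGraph.mem_edgeSet, SimpleGraph.fromRel_adj] at hx
        obtain ⟨-, ⟨e, rfl, rfl⟩ | ⟨e, rfl, rfl⟩⟩ := hx
        · exact ⟨e, rfl⟩
        · exact ⟨e, Subtype.ext Sym2.eq_swap⟩
  have := hconn.card_vert_le_card_edgeSet_add_one
  rw [Nat.card_eq_fintype_card (α := V)] at this
  rw [Nat.card_eq_fintype_card (α := E)] at hedges
  omega

lemma exists_edge_ne_of_connected {C : Type*} (hconn : (edgeGraph ep1 ep2).Connected)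
    (σ : V → C) {u v : V} (huv : σ u ≠ σ v) : ∃ e, σ (ep1 e) ≠ σ (ep2 e) := by
  obtain ⟨d, -, hd, hd'⟩ :=
    (hconn.preconnected u v).some.exists_boundary_dart {x | σ x = σ u} rfl huv.symm
  obtain ⟨-, ⟨e, he1, he2⟩ | ⟨e, he1, he2⟩⟩ := d.adj
  · exact ⟨e, by rw [he1, he2, hd]; exact fun h => hd' h.symm⟩
  · exact ⟨e, by rw [he1, he2, hd]; exact hd'⟩

lemma prod_pow_deg [Fintype V] [DecidableEq V] [DecidableEq E] {M : Type*} [CommMonoid M]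
    (hloop : ∀ e, ep1 e ≠ ep2 e) (f : V → M) (s : Finset E) :
    ∏ i, f i ^ deg ep1 ep2 i s = ∏ e ∈ s, f (ep1 e) * f (ep2 e) := by
  simp_rw [deg, ← prod_const, prod_filter]
  rw [prod_comm]
  refine prod_congr rfl fun e _ => ?_
  rw [← prod_filter, filter_or, filter_eq, filter_eq, if_pos (mem_univ _), if_pos (mem_univ _),
    prod_union (disjoint_singleton.2 (hloop e)), prod_singleton, prod_singleton]

theorem sum_prod_sum_pow_deg [Fintype V] [DecidableEq V] [Fintype E] [DecidableEq E]
    {R C : Type*} [CommSemiring R] [Fintype C] (hloop : ∀ e, ep1 e ≠ ep2 e) (a μ : C → R) :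
    ∑ s : Finset E, ∏ i, ∑ c, a c * μ c ^ deg ep1 ep2 i s
      = ∑ σ : V → C, (∏ i, a (σ i)) * ∏ e, (1 + μ (σ (ep1 e)) * μ (σ (ep2 e))) := by
  simp_rw [Fintype.prod_sum, prod_mul_distrib, prod_pow_deg hloop]
  rw [sum_comm]
  simp_rw [← mul_sum, prod_one_add, powerset_univ]

theorem sum_colorings_eq_sum_const [Fintype V] [DecidableEq V] [Fintype E]
    {R C : Type*} [CommRing R] [Fintype C] [DecidableEq C]
    (hconn : (edgeGraph ep1 ep2).Connected) (a μ : C → R)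
    (hμ : ∀ c c', c ≠ c' → μ c * μ c' = -1) :
    ∑ σ : V → C, (∏ i, a (σ i)) * ∏ e, (1 + μ (σ (ep1 e)) * μ (σ (ep2 e)))
      = ∑ c, a c ^ Fintype.card V * (1 + μ c ^ 2) ^ Fintype.card E := by
  obtain ⟨v⟩ := hconn.nonempty
  have hconst : (univ.image fun (c : C) (_ : V) => c) ⊆ univ := subset_univ _
  rw [← sum_subset hconst, sum_image]
  · simp [sq]
  · intro c _ c' _ h
    exact congrFun h v
  · intro σ _ hσ
    obtain ⟨u, hu⟩ : ∃ u, σ u ≠ σ v := by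
      by_contra! h
      exact hσ (mem_image.2 ⟨σ v, mem_univ _, funext h |>.symm⟩)
    obtain ⟨e, he⟩ := exists_edge_ne_of_connected hconn σ hu
    rw [prod_eq_zero (mem_univ e) (by rw [hμ _ _ he, add_neg_cancel]), mul_zero]

theorem sum_prod_loopWeight_deg [Fintype V] [DecidableEq V] [Fintype E] [DecidableEq E]
    (hloop : ∀ e, ep1 e ≠ ep2 e) (hconn : (edgeGraph ep1 ep2).Connected) :
    ((∑ s : Finset E, ∏ i, loopWeight (deg ep1 ep2 i s) : ℕ) : ℝ)
      = ((5 - √5) / 2) ^ ((Fintype.card E : ℤ) - Fintype.card V)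
        + ((5 + √5) / 2) ^ ((Fintype.card E : ℤ) - Fintype.card V) := by
  push_cast
  simp_rw [loopWeight_eq_sum_golden]
  rw [sum_prod_sum_pow_deg hloop,
    sum_colorings_eq_sum_const hconn (fun c => (1 + ![φ, ψ] c ^ 2)⁻¹) _ fun _ _ => golden_mul_of_ne]
  simp only [Fin.sum_univ_two, Matrix.cons_val_zero, Matrix.cons_val_one,
    inv_pow_mul_pow_eq_zpow_sub (by positivity : (1 + _ ^ 2 : ℝ) ≠ 0),
    one_add_goldenRatio_sq, one_add_goldenConj_sq]
  rw [add_comm]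

end Graph

section Counting

variable {ι κ : Type*} [Fintype κ] (t : Finset ι) (d : ι → κ → ℕ)

lemma sum_prod_loopWeight_eq_sum_filter :
    ∑ x ∈ t, ∏ k, loopWeight (d x k) = ∑ x ∈ t with ∀ k, d x k ≠ 1, ∏ k, loopWeight (d x k) :=
  (sum_filter_of_ne fun _ _ hx k hk => hx (prod_eq_zero (mem_univ k) (hk ▸ loopWeight_one))).symm

lemma card_filter_le_sum_prod_loopWeight :
    #{x ∈ t | ∀ k, d x k ≠ 1} ≤ ∑ x ∈ t, ∏ k, loopWeight (d x k) := by
  rw [sum_prod_loopWeight_eq_sum_filter, card_eq_sum_ones]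
  exact sum_le_sum fun x hx => one_le_prod' fun k _ => one_le_loopWeight ((mem_filter.1 hx).2 k)

lemma card_filter_eq_sum_prod_loopWeight_iff :
    #{x ∈ t | ∀ k, d x k ≠ 1} = ∑ x ∈ t, ∏ k, loopWeight (d x k) ↔
      ∀ x ∈ {x ∈ t | ∀ k, d x k ≠ 1}, ∀ k, d x k ≤ 3 := by
  have hG0 : ∀ x ∈ {x ∈ t | ∀ k, d x k ≠ 1}, ∀ k, d x k ≠ 1 := fun x hx => (mem_filter.1 hx).2
  rw [sum_prod_loopWeight_eq_sum_filter, card_eq_sum_ones, sum_eq_sum_iff_of_le fun x hx =>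
    one_le_prod' fun k _ => one_le_loopWeight (hG0 x hx k)]
  refine forall₂_congr fun x hx => ?_
  rw [eq_comm, prod_eq_one_iff_of_one_le' fun k _ => one_le_loopWeight (hG0 x hx k)]
  exact forall_congr' fun k => (imp_iff_right (mem_univ k)).trans
    (loopWeight_eq_one_iff (hG0 x hx k))

end Counting

theorem stmt_11_general {V E : Type} [Fintype V] [DecidableEq V] [Fintype E] [DecidableEq E]
    -- a finite connected simple graph
    (ep1 ep2 : E → V)
    (hloop : ∀ e, ep1 e ≠ ep2 e)
    (hconn : (SimpleGraph.fromRel fun a b => ∃ e, ep1 e = a ∧ ep2 e = b).Connected)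
    -- `G0` is the set of generalized loops together with the empty set
    (G0 : Finset (Finset E))
    (hG0 : G0 = Finset.univ.filter fun s => ∀ i : V, deg ep1 ep2 i s ≠ 1) :
    -- `n(G) = |E| - |V| + 1`, here computed as `|E| + 1 - |V|` in ℕ
    (G0.card : ℝ) ≤
        ((5 - Real.sqrt 5) / 2) ^ (((Fintype.card E + 1 - Fintype.card V : ℕ) : ℤ) - 1)
        + ((5 + Real.sqrt 5) / 2) ^ (((Fintype.card E + 1 - Fintype.card V : ℕ) : ℤ) - 1)
    ∧ ((G0.card : ℝ) =
        ((5 - Real.sqrt 5) / 2) ^ (((Fintype.card E + 1 - Fintype.card V : ℕ) : ℤ) - 1)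
        + ((5 + Real.sqrt 5) / 2) ^ (((Fintype.card E + 1 - Fintype.card V : ℕ) : ℤ) - 1)
      ↔ ∀ s ∈ G0, ∀ i : V, deg ep1 ep2 i s ≤ 3) := by
  subst hG0
  have hV := card_le_card_add_one_of_connected hloop hconn
  have hexp : ((Fintype.card E + 1 - Fintype.card V : ℕ) : ℤ) - 1
      = (Fintype.card E : ℤ) - Fintype.card V := by
    omega
  rw [hexp, ← sum_prod_loopWeight_deg hloop hconn, Nat.cast_le, Nat.cast_inj]
  exact ⟨card_filter_le_sum_prod_loopWeight _ _, card_filter_eq_sum_prod_loopWeight_iff _ _⟩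

theorem stmt_11 {V E : Type} [Fintype V] [DecidableEq V] [Fintype E] [DecidableEq E]
    -- a finite connected simple graph
    (ep1 ep2 : E → V)
    (hloop : ∀ e, ep1 e ≠ ep2 e)
    (hsimple : ∀ e e',
      (ep1 e = ep1 e' ∧ ep2 e = ep2 e') ∨ (ep1 e = ep2 e' ∧ ep2 e = ep1 e') → e = e')
    (hconn : (SimpleGraph.fromRel fun a b => ∃ e, ep1 e = a ∧ ep2 e = b).Connected)
    -- `G0` is the set of generalized loops together with the empty set
    (G0 : Finset (Finset E))
    (hG0 : G0 = Finset.univ.filter fun s => ∀ i : V, deg ep1 ep2 i s ≠ 1) :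
    -- `n(G) = |E| - |V| + 1`, here computed as `|E| + 1 - |V|` in ℕ
    (G0.card : ℝ) ≤
        ((5 - Real.sqrt 5) / 2) ^ (((Fintype.card E + 1 - Fintype.card V : ℕ) : ℤ) - 1)
        + ((5 + Real.sqrt 5) / 2) ^ (((Fintype.card E + 1 - Fintype.card V : ℕ) : ℤ) - 1)
    ∧ ((G0.card : ℝ) =
        ((5 - Real.sqrt 5) / 2) ^ (((Fintype.card E + 1 - Fintype.card V : ℕ) : ℤ) - 1)
        + ((5 + Real.sqrt 5) / 2) ^ (((Fintype.card E + 1 - Fintype.card V : ℕ) : ℤ) - 1)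
      ↔ ∀ s ∈ G0, ∀ i : V, deg ep1 ep2 i s ≤ 3) :=
  stmt_11_general ep1 ep2 hloop hconn G0 hG0
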